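/- Let A_1, …, A_k be nonempty, convex, closed subsets of a real Hilbert space H, let α ∈ [0,1], let T = P_{A_k}^α ∘ P_{A_{k−1}}^α ∘ ⋯ ∘ P_{A_1}^α, and let r > 0. If (x_n) is a sequence in H with ‖x_n‖ ≤ r for all n and ‖T(x_n) − x_n‖ → 0 as n → ∞, then T has a fixed point x₀ with ‖x₀‖ ≤ r. -/

import Mathlib

/-!
Each relaxed projection `relax α (P i)` is an average of the identity and a metric projection, so
it is nonexpansive, and hence so is the composite `T`. For the bounded sequence `x`, the asymptotic
radius `R y = limsup ‖x n - y‖` is `1`-Lipschitz, and by the parallelogram law `R ^ 2` is strongly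
convex along midpoints; in a complete space it therefore attains its minimum at a unique point `z`,
the asymptotic center of `x`. A nonexpansive map `S` with `‖S (x n) - x n‖ → 0` satisfies
`R (S z) ≤ R z`, so it fixes `z`. This applies to `T`, and also to the projection onto the closed
ball of radius `r`, which fixes every `x n`; hence `T z = z` and `‖z‖ ≤ r`.
-/

/-- `P` is the metric projection onto `A`: for every `x`, `P x` belongs to `A` and
is a point of `A` nearest to `x`. -/
def IsMetricProj {H : Type*} [NormedAddCommGroup H] (A : Set H) (P : H → H) : Prop :=
  ∀ x, P x ∈ A ∧ ∀ y ∈ A, dist x (P x) ≤ dist x y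

/-- The `α`-relaxed version of a map `P`: `x ↦ α • P x + (1 - α) • x`. -/
def relax {H : Type*} [AddCommGroup H] [Module ℝ H] (α : ℝ) (P : H → H) : H → H :=
  fun x => α • P x + (1 - α) • x

/-- The composition `T (k-1) ∘ ⋯ ∘ T 1 ∘ T 0` (so `T 0` is applied first). -/
def compFold {H : Type*} {k : ℕ} (T : Fin k → H → H) : H → H :=
  (List.ofFn T).foldl (fun g f => f ∘ g) id

open Filter Topology Set
open scoped RealInnerProductSpace

section MetricProjection

variable {H : Type*} [NormedAddCommGroup H] {A : Set H} {P : H → H}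

lemma IsMetricProj.apply_eq_self (hP : IsMetricProj A P) {a : H} (ha : a ∈ A) : P a = a :=
  (dist_le_zero.1 <| by simpa using (hP a).2 a ha).symm

variable [InnerProductSpace ℝ H]

lemma IsMetricProj.inner_sub_le_zero (hA : Convex ℝ A) (hP : IsMetricProj A P) (x : H)
    {y : H} (hy : y ∈ A) : ⟪x - P x, y - P x⟫ ≤ 0 := by
  have hPx := (hP x).1
  have : Nonempty A := ⟨⟨P x, hPx⟩⟩
  refine (norm_eq_iInf_iff_real_inner_le_zero hA hPx).1 (le_antisymm (le_ciInf fun w => ?_)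
    (ciInf_le ⟨0, by rintro _ ⟨w, rfl⟩; positivity⟩ (⟨P x, hPx⟩ : A))) y hy
  simpa only [dist_eq_norm] using (hP x).2 w w.2

lemma IsMetricProj.norm_sub_sq_le_inner (hA : Convex ℝ A) (hP : IsMetricProj A P) (a b : H) :
    ‖P a - P b‖ ^ 2 ≤ ⟪a - b, P a - P b⟫ := by
  have ha := hP.inner_sub_le_zero hA a (hP b).1
  have hb := hP.inner_sub_le_zero hA b (hP a).1
  rw [← real_inner_self_eq_norm_sq]
  simp only [inner_sub_left, inner_sub_right, real_inner_comm] at ha hb ⊢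
  linarith

lemma IsMetricProj.lipschitzWith (hA : Convex ℝ A) (hP : IsMetricProj A P) :
    LipschitzWith 1 P := by
  refine LipschitzWith.mk_one fun a b => ?_
  rw [dist_eq_norm, dist_eq_norm]
  have h := (hP.norm_sub_sq_le_inner hA a b).trans (real_inner_le_norm _ _)
  nlinarith [norm_nonneg (P a - P b), norm_nonneg (a - b)]

lemma exists_isMetricProj (hne : A.Nonempty) (hc : IsComplete A) (hA : Convex ℝ A) :
    ∃ P : H → H, IsMetricProj A P := by
  choose P hPA hP using fun x => exists_norm_eq_iInf_of_complete_convex hne hc hA x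
  refine ⟨P, fun x => ⟨hPA x, fun y hy => ?_⟩⟩
  have : Nonempty A := hne.to_subtype
  rw [dist_eq_norm, dist_eq_norm, hP x]
  exact ciInf_le ⟨0, by rintro _ ⟨w, rfl⟩; positivity⟩ (⟨y, hy⟩ : A)

end MetricProjection

lemma LipschitzWith.relax {E : Type*} [SeminormedAddCommGroup E] [NormedSpace ℝ E] {P : E → E}
    (hP : LipschitzWith 1 P) {α : ℝ} (hα : α ∈ Icc (0 : ℝ) 1) :
    LipschitzWith 1 (_root_.relax α P) := by
  refine LipschitzWith.mk_one fun a b => ?_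
  have hPab : ‖P a - P b‖ ≤ ‖a - b‖ := by simpa [dist_eq_norm] using hP.dist_le_mul a b
  have e : _root_.relax α P a - _root_.relax α P b = α • (P a - P b) + (1 - α) • (a - b) := by
    simp only [_root_.relax, smul_sub]; abel
  rw [dist_eq_norm, dist_eq_norm, e]
  calc ‖α • (P a - P b) + (1 - α) • (a - b)‖
      ≤ α * ‖P a - P b‖ + (1 - α) * ‖a - b‖ := by
        refine (norm_add_le _ _).trans_eq ?_
        rw [norm_smul, norm_smul, Real.norm_of_nonneg hα.1, Real.norm_of_nonneg (sub_nonneg.2 hα.2)]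
    _ ≤ α * ‖a - b‖ + (1 - α) * ‖a - b‖ := by gcongr; exact hα.1
    _ = ‖a - b‖ := by ring

lemma LipschitzWith.foldl_comp {X : Type*} [PseudoEMetricSpace X] (l : List (X → X))
    (hl : ∀ f ∈ l, LipschitzWith 1 f) {g : X → X} (hg : LipschitzWith 1 g) :
    LipschitzWith 1 (l.foldl (fun g f => f ∘ g) g) := by
  induction l generalizing g with
  | nil => exact hg
  | cons f t ih =>
    simpa using ih (fun f' hf' => hl f' (List.mem_cons_of_mem _ hf'))
      (by simpa using (hl f List.mem_cons_self).comp hg)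

lemma LipschitzWith.compFold {X : Type*} [PseudoEMetricSpace X] {k : ℕ} {T : Fin k → X → X}
    (hT : ∀ i, LipschitzWith 1 (T i)) : LipschitzWith 1 (compFold T) :=
  LipschitzWith.foldl_comp _ (by simpa [List.mem_ofFn] using hT) LipschitzWith.id

section MidpointStronglyConvex

variable {E : Type*} [NormedAddCommGroup E] [NormedSpace ℝ E] {Φ : E → ℝ}

lemma eq_of_forall_le_of_midpoint_le
    (hmid : ∀ y z, Φ (midpoint ℝ y z) ≤ (Φ y + Φ z) / 2 - dist y z ^ 2 / 4)
    {z w : E} (hz : ∀ y, Φ z ≤ Φ y) (hw : Φ w ≤ Φ z) : w = z := by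
  have := hmid w z
  have := hz (midpoint ℝ w z)
  exact dist_le_zero.1 (by nlinarith [dist_nonneg (x := w) (y := z)])

lemma exists_forall_le_of_midpoint_le [CompleteSpace E] (hΦ : Continuous Φ)
    (hbdd : BddBelow (range Φ))
    (hmid : ∀ y z, Φ (midpoint ℝ y z) ≤ (Φ y + Φ z) / 2 - dist y z ^ 2 / 4) :
    ∃ z, ∀ y, Φ z ≤ Φ y := by
  obtain ⟨u, hu_anti, hu_lim, hu_mem⟩ := exists_seq_tendsto_sInf (range_nonempty Φ) hbdd
  set m := sInf (range Φ)
  have hm : ∀ w, m ≤ Φ w := fun w => csInf_le hbdd ⟨w, rfl⟩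
  choose y hy using hu_mem
  -- strong convexity turns a minimizing sequence into a Cauchy sequence
  have hdist : ∀ i j N, N ≤ i → N ≤ j → dist (y i) (y j) ≤ √(4 * (u N - m)) := by
    intro i j N hi hj
    refine Real.le_sqrt_of_sq_le ?_
    have := hmid (y i) (y j)
    have := hm (midpoint ℝ (y i) (y j))
    have := hu_anti hi
    have := hu_anti hj
    rw [hy, hy] at *
    linarith
  have hb : Tendsto (fun N => √(4 * (u N - m))) atTop (𝓝 0) := by
    simpa using (((hu_lim.sub_const m).const_mul 4).sqrt)
  obtain ⟨z, hz⟩ := cauchySeq_tendsto_of_complete (cauchySeq_of_le_tendsto_0 _ hdist hb)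
  have hΦz : Φ z = m :=
    tendsto_nhds_unique ((hΦ.tendsto z).comp hz) (by simpa [Function.comp_def, hy] using hu_lim)
  exact ⟨z, hΦz ▸ hm⟩

end MidpointStronglyConvex

lemma limsup_const_mul_sq {ι : Type*} {l : Filter ι} [l.NeBot] {u : ι → ℝ} {c : ℝ} (hc : 0 ≤ c)
    (hu : ∀ i, 0 ≤ u i) (hb : IsBoundedUnder (· ≤ ·) l u) :
    limsup (fun i => c * u i ^ 2) l = c * limsup u l ^ 2 := by
  -- `t ↦ c * max t 0 ^ 2` is monotone on all of `ℝ` and agrees with `t ↦ c * t ^ 2` on `u`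
  have hmono : Monotone fun t : ℝ => c * max t 0 ^ 2 := fun _ _ hst =>
    mul_le_mul_of_nonneg_left (pow_le_pow_left₀ (le_max_right _ _) (max_le_max_right 0 hst) 2) hc
  have hcobdd : IsCoboundedUnder (· ≤ ·) l u := (isBoundedUnder_of ⟨0, hu⟩).isCoboundedUnder_le
  have h := hmono.map_limsup_of_continuousAt u (by fun_prop) hb hcobdd
  have hnonneg : 0 ≤ limsup u l := le_limsup_of_frequently_le (.of_forall hu) hb
  simp only [Function.comp_def, max_eq_left (hu _), max_eq_left hnonneg] at h
  exact h.symm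

section AsymptoticRadius

variable {ι X : Type*} [PseudoMetricSpace X] {l : Filter ι} {x : ι → X}

noncomputable def asymptoticRadius (l : Filter ι) (x : ι → X) (y : X) : ℝ :=
  limsup (fun i => dist (x i) y) l

lemma isBoundedUnder_dist (hx : Bornology.IsBounded (range x)) (y : X) :
    IsBoundedUnder (· ≤ ·) l fun i => dist (x i) y := by
  obtain ⟨C, hC⟩ := (Metric.isBounded_iff_subset_closedBall y).1 hx
  exact isBoundedUnder_of ⟨C, fun i => hC (mem_range_self i)⟩

lemma isBoundedUnder_const_mul_dist_sq (hx : Bornology.IsBounded (range x)) {c : ℝ} (hc : 0 ≤ c)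
    (y : X) : IsBoundedUnder (· ≤ ·) l fun i => c * dist (x i) y ^ 2 := by
  obtain ⟨C, hC⟩ := (Metric.isBounded_iff_subset_closedBall y).1 hx
  refine isBoundedUnder_of ⟨c * C ^ 2, fun i => ?_⟩
  have : dist (x i) y ≤ C := hC (mem_range_self i)
  gcongr

variable [l.NeBot]

lemma isCoboundedUnder_const_mul_dist_sq {c : ℝ} (hc : 0 ≤ c) (y : X) :
    IsCoboundedUnder (· ≤ ·) l fun i => c * dist (x i) y ^ 2 :=
  (isBoundedUnder_of ⟨0, fun i => by positivity⟩).isCoboundedUnder_le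

lemma isCoboundedUnder_dist (y : X) : IsCoboundedUnder (· ≤ ·) l fun i => dist (x i) y :=
  (isBoundedUnder_of ⟨0, fun _ => dist_nonneg⟩).isCoboundedUnder_le

lemma asymptoticRadius_nonneg (hx : Bornology.IsBounded (range x)) (y : X) :
    0 ≤ asymptoticRadius l x y :=
  le_limsup_of_frequently_le (.of_forall fun _ => dist_nonneg) (isBoundedUnder_dist hx y)

lemma asymptoticRadius_le_add_dist (hx : Bornology.IsBounded (range x)) (y z : X) :
    asymptoticRadius l x y ≤ asymptoticRadius l x z + dist y z :=
  calc asymptoticRadius l x y ≤ limsup (fun i => dist (x i) z + dist y z) l :=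
        limsup_le_limsup (.of_forall fun i => by linarith [dist_triangle (x i) z y, dist_comm y z])
          (isCoboundedUnder_dist y) (isBoundedUnder_le_add (isBoundedUnder_dist hx z)
            isBoundedUnder_const)
    _ = asymptoticRadius l x z + dist y z :=
        limsup_add_const _ _ _ (isBoundedUnder_dist hx z) (isCoboundedUnder_dist z)

lemma lipschitzWith_asymptoticRadius (hx : Bornology.IsBounded (range x)) :
    LipschitzWith 1 (asymptoticRadius l x) :=
  LipschitzWith.of_le_add (asymptoticRadius_le_add_dist hx)

lemma asymptoticRadius_apply_le (hx : Bornology.IsBounded (range x)) {T : X → X}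
    (hT : LipschitzWith 1 T) (hTx : Tendsto (fun i => dist (T (x i)) (x i)) l (𝓝 0)) (z : X) :
    asymptoticRadius l x (T z) ≤ asymptoticRadius l x z := by
  have hpt : ∀ i, dist (x i) (T z) ≤ dist (x i) z + dist (T (x i)) (x i) := fun i => by
    have hTi : dist (T (x i)) (T z) ≤ dist (x i) z := by
      simpa using hT.dist_le_mul (x i) z
    linarith [dist_triangle (x i) (T (x i)) (T z), dist_comm (x i) (T (x i))]
  calc asymptoticRadius l x (T z)
      ≤ limsup ((fun i => dist (x i) z) + fun i => dist (T (x i)) (x i)) l :=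
        limsup_le_limsup (.of_forall hpt) (isCoboundedUnder_dist _)
          (isBoundedUnder_le_add (isBoundedUnder_dist hx z) hTx.isBoundedUnder_le)
    _ ≤ asymptoticRadius l x z + limsup (fun i => dist (T (x i)) (x i)) l :=
        limsup_add_le (isBoundedUnder_of ⟨0, fun _ => dist_nonneg⟩) (isBoundedUnder_dist hx z)
          hTx.isBoundedUnder_ge.isCoboundedUnder_le hTx.isBoundedUnder_le
    _ = asymptoticRadius l x z := by rw [hTx.limsup_eq, add_zero]

def IsAsymptoticCenter (l : Filter ι) (x : ι → X) (z : X) : Prop :=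
  ∀ y, asymptoticRadius l x z ≤ asymptoticRadius l x y

lemma isAsymptoticCenter_iff_sq (hx : Bornology.IsBounded (range x)) {z : X} :
    IsAsymptoticCenter l x z ↔ ∀ y, asymptoticRadius l x z ^ 2 ≤ asymptoticRadius l x y ^ 2 :=
  forall_congr' fun y =>
    (pow_le_pow_iff_left₀ (asymptoticRadius_nonneg hx z) (asymptoticRadius_nonneg hx y)
      two_ne_zero).symm

end AsymptoticRadius

section AsymptoticRadiusHilbert

variable {ι H : Type*} [NormedAddCommGroup H] [InnerProductSpace ℝ H] {l : Filter ι} [l.NeBot]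
  {x : ι → H}

lemma asymptoticRadius_midpoint_sq_le (hx : Bornology.IsBounded (range x)) (y z : H) :
    asymptoticRadius l x (midpoint ℝ y z) ^ 2
      ≤ (asymptoticRadius l x y ^ 2 + asymptoticRadius l x z ^ 2) / 2 - dist y z ^ 2 / 4 := by
  have hsq : ∀ {c : ℝ}, 0 ≤ c → ∀ w,
      limsup (fun i => c * dist (x i) w ^ 2) l = c * asymptoticRadius l x w ^ 2 :=
    fun hc w => limsup_const_mul_sq hc (fun _ => dist_nonneg) (isBoundedUnder_dist hx w)
  have hapollonius : ∀ i, 2 * dist (x i) (midpoint ℝ y z) ^ 2 + dist y z ^ 2 / 2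
      = 1 * dist (x i) y ^ 2 + 1 * dist (x i) z ^ 2 := fun i => by
    have := EuclideanGeometry.dist_sq_add_dist_sq_eq_two_mul_dist_midpoint_sq_add_half_dist_sq
      (x i) y z
    linarith
  have key : 2 * asymptoticRadius l x (midpoint ℝ y z) ^ 2 + dist y z ^ 2 / 2
      ≤ asymptoticRadius l x y ^ 2 + asymptoticRadius l x z ^ 2 :=
    calc 2 * asymptoticRadius l x (midpoint ℝ y z) ^ 2 + dist y z ^ 2 / 2
        = limsup (fun i => 2 * dist (x i) (midpoint ℝ y z) ^ 2 + dist y z ^ 2 / 2) l := by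
          rw [limsup_add_const _ _ _ (isBoundedUnder_const_mul_dist_sq hx zero_le_two _)
            (isCoboundedUnder_const_mul_dist_sq zero_le_two _), hsq zero_le_two]
      _ = limsup ((fun i => 1 * dist (x i) y ^ 2) + fun i => 1 * dist (x i) z ^ 2) l := by
          simp only [hapollonius, Pi.add_def]
      _ ≤ limsup (fun i => 1 * dist (x i) y ^ 2) l + limsup (fun i => 1 * dist (x i) z ^ 2) l :=
          limsup_add_le (isBoundedUnder_of ⟨0, fun i => by positivity⟩)
            (isBoundedUnder_const_mul_dist_sq hx zero_le_one _)
            (isCoboundedUnder_const_mul_dist_sq zero_le_one _)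
            (isBoundedUnder_const_mul_dist_sq hx zero_le_one _)
      _ = asymptoticRadius l x y ^ 2 + asymptoticRadius l x z ^ 2 := by
          rw [hsq zero_le_one, hsq zero_le_one, one_mul, one_mul]
  linarith

lemma exists_isAsymptoticCenter [CompleteSpace H] (hx : Bornology.IsBounded (range x)) :
    ∃ z, IsAsymptoticCenter l x z := by
  simp only [isAsymptoticCenter_iff_sq hx]
  exact exists_forall_le_of_midpoint_le ((lipschitzWith_asymptoticRadius hx).continuous.pow 2)
    ⟨0, by rintro _ ⟨y, rfl⟩; positivity⟩ (asymptoticRadius_midpoint_sq_le hx)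

lemma IsAsymptoticCenter.apply_eq_self (hx : Bornology.IsBounded (range x)) {z : H}
    (hz : IsAsymptoticCenter l x z) {T : H → H} (hT : LipschitzWith 1 T)
    (hTx : Tendsto (fun i => dist (T (x i)) (x i)) l (𝓝 0)) : T z = z :=
  eq_of_forall_le_of_midpoint_le (Φ := fun y => asymptoticRadius l x y ^ 2)
    (asymptoticRadius_midpoint_sq_le hx)
    ((isAsymptoticCenter_iff_sq hx).1 hz)
    (pow_le_pow_left₀ (asymptoticRadius_nonneg hx _) (asymptoticRadius_apply_le hx hT hTx z) 2)

end AsymptoticRadiusHilbert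

theorem stmt_18_general {H : Type*} [NormedAddCommGroup H] [InnerProductSpace ℝ H] [CompleteSpace H]
    (k : ℕ) (A : Fin k → Set H)
    (hA : ∀ i, (A i).Nonempty ∧ Convex ℝ (A i) ∧ IsClosed (A i))
    (P : Fin k → H → H) (hP : ∀ i, IsMetricProj (A i) (P i))
    (α : ℝ) (hα : α ∈ Set.Icc (0 : ℝ) 1) (r : ℝ)
    (x : ℕ → H) (hx : ∀ n, ‖x n‖ ≤ r)
    (hTx : Filter.Tendsto
      (fun n => ‖compFold (fun i => relax α (P i)) (x n) - x n‖) Filter.atTop (nhds 0)) :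
    ∃ x₀ : H, compFold (fun i => relax α (P i)) x₀ = x₀ ∧ ‖x₀‖ ≤ r := by
  have hT : LipschitzWith 1 (compFold fun i => relax α (P i)) :=
    LipschitzWith.compFold fun i => ((hP i).lipschitzWith (hA i).2.1).relax hα
  have hxB : range x ⊆ Metric.closedBall 0 r := by
    rintro _ ⟨n, rfl⟩
    simpa using hx n
  have hbdd : Bornology.IsBounded (range x) := Metric.isBounded_closedBall.subset hxB
  obtain ⟨z, hz⟩ := exists_isAsymptoticCenter (l := atTop) hbdd
  refine ⟨z, hz.apply_eq_self hbdd hT (by simpa only [dist_eq_norm] using hTx), ?_⟩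
  -- the projection onto the ball fixes every `x n`, hence also the asymptotic center
  obtain ⟨Q, hQ⟩ := exists_isMetricProj ⟨x 0, hxB ⟨0, rfl⟩⟩ Metric.isClosed_closedBall.isComplete
    (convex_closedBall (0 : H) r)
  have hQz : Q z = z := hz.apply_eq_self hbdd (hQ.lipschitzWith (convex_closedBall _ _))
    (by simp [hQ.apply_eq_self (hxB ⟨_, rfl⟩)])
  simpa [hQz] using (hQ z).1

theorem stmt_18 {H : Type*} [NormedAddCommGroup H] [InnerProductSpace ℝ H] [CompleteSpace H]
    (k : ℕ) (hk : 1 ≤ k) (A : Fin k → Set H)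
    (hA : ∀ i, (A i).Nonempty ∧ Convex ℝ (A i) ∧ IsClosed (A i))
    (P : Fin k → H → H) (hP : ∀ i, IsMetricProj (A i) (P i))
    (α : ℝ) (hα : α ∈ Set.Icc (0 : ℝ) 1) (r : ℝ) (hr : 0 < r)
    (x : ℕ → H) (hx : ∀ n, ‖x n‖ ≤ r)
    (hTx : Filter.Tendsto
      (fun n => ‖compFold (fun i => relax α (P i)) (x n) - x n‖) Filter.atTop (nhds 0)) :
    ∃ x₀ : H, compFold (fun i => relax α (P i)) x₀ = x₀ ∧ ‖x₀‖ ≤ r :=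
  stmt_18_general k A hA P hP α hα r x hx hTx
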